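/- Assume that gcd(h(x) - beta, x^n - 1) = 1 in F_q[x] for every nonzero beta in F_q, and that f(x) divides g(x), g(x) divides g^perp(x), and g^perp(x) divides f^perp(x). Then the quasi-cyclic code Q := Q_q(f,g,h) satisfies Q^{perp_s} is contained in Q, the dimension of Q is 2n - deg(f(x)) - deg(g(x)), and every element of Q not lying in Q^{perp_s} has symplectic weight at least d_q(f,g,h) (the minimum, in the rational numbers, of d([g(x)]); d([(x^n-1)/gcd(x^n-1, h(x))]); d([lcm(f(x), g(x)/gcd(g(x), h(x)))]); and (d([f(x)]) + d([gcd(h(x)f(x), g(x))]) + (q-1) d([gcd(f(x), g(x))])) / q). -/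

import Mathlib

/-!
Identify `F^n` with `F[X]/(X^n - 1)` and write `ũ = reflect n u`. The Euclidean pairing of
`[u]` with `[w]` is the constant term of `ũ w mod (X^n - 1)`, so `([u], [v])` is symplectically
orthogonal to `Q` iff `X^n - 1` divides both `ũ g` and `(ũ h - ṽ) f`. Reflecting these
divisibilities gives `g^⊥ ∣ u` and `f^⊥ ∣ u h̃ - X^n v`; through `g ∣ g^⊥ ∣ f^⊥` both yield
`g ∣ u` and `g ∣ v`, so `(u, v) = (a f, a h f + b g)` since `f ∣ g`.

For the weight bound write a codeword as `(c₁, c₂)`. A coordinate with `(c₁ i, c₂ i) ≠ (0, 0)` is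
nonzero in exactly `q` of the `q + 1` vectors `c₁` and `c₂ - β c₁` (`β ∈ F`), so
`q · w_s(c₁, c₂) = wt c₁ + Σ_β wt (c₂ - β c₁)`, and these vectors lie in the cyclic codes of `f`,
`gcd(h f, g)` and `gcd(f, g)`. If `c₂ = β c₁` then `g ∣ a f (h - β)`, so `c₁` lies in the code of
`g` when `β ≠ 0` (as `h - β` is a unit modulo `X^n - 1`) and in that of
`lcm(f, g / gcd(g, h))` when `β = 0`.
-/

open Polynomial Finset

noncomputable section

variable {F : Type*} [Field F] [DecidableEq F]

/-- The vector in `F^n` corresponding to the residue class of a polynomial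
in `F[x]/(x^n-1)`: the coefficients of its canonical representative of degree `< n`. -/
def vecOf (n : ℕ) : F[X] →ₗ[F] (Fin n → F) where
  toFun a := fun i => (a %ₘ (X ^ n - 1)).coeff i
  map_add' a b := by
    funext i
    simp [Polynomial.add_modByMonic]
  map_smul' c a := by
    funext i
    simp [Polynomial.smul_modByMonic]

/-- The quasi-cyclic code `Q_q(f,g,h)`: the `F`-subspace of `F^n × F^n ≃ F^{2n}`
corresponding to the `R`-submodule of `R²` generated by `([f],[h f])` and `(0,[g])`. -/
def QCcode (n : ℕ) (f g h : F[X]) : Submodule F ((Fin n → F) × (Fin n → F)) where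
  carrier := {v | ∃ a b : F[X], v = (vecOf n (a * f), vecOf n (a * h * f + b * g))}
  zero_mem' := ⟨0, 0, by simp; rfl⟩
  add_mem' := by
    rintro v w ⟨a1, b1, rfl⟩ ⟨a2, b2, rfl⟩
    refine ⟨a1 + a2, b1 + b2, ?_⟩
    have h1 : (a1 + a2) * f = a1 * f + a2 * f := by ring
    have h2 : (a1 + a2) * h * f + (b1 + b2) * g
        = (a1 * h * f + b1 * g) + (a2 * h * f + b2 * g) := by ring
    rw [h1, h2, map_add (vecOf n) (a1 * f) (a2 * f),
      map_add (vecOf n) (a1 * h * f + b1 * g) (a2 * h * f + b2 * g)]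
    rfl
  smul_mem' := by
    rintro c v ⟨a, b, rfl⟩
    refine ⟨c • a, c • b, ?_⟩
    have h1 : (c • a) * f = c • (a * f) := smul_mul_assoc c a f
    have h2 : (c • a) * h * f + (c • b) * g = c • (a * h * f + b * g) := by
      rw [smul_add, smul_mul_assoc, smul_mul_assoc, smul_mul_assoc]
    rw [h1, h2, map_smul, map_smul]
    rfl

/-- Hamming weight of a vector. -/
def hWt {n : ℕ} (x : Fin n → F) : ℕ := Nat.card {i : Fin n // x i ≠ 0}

/-- Hamming weight of a vector of `F^{2n}` presented as a pair. -/
def hWt2 {n : ℕ} (v : (Fin n → F) × (Fin n → F)) : ℕ := hWt v.1 + hWt v.2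

/-- Symplectic weight. -/
def sWt {n : ℕ} (v : (Fin n → F) × (Fin n → F)) : ℕ :=
  Nat.card {i : Fin n // (v.1 i, v.2 i) ≠ (0, 0)}

/-- Euclidean inner product on `F^n`. -/
def eInn {n : ℕ} (x y : Fin n → F) : F := ∑ i, x i * y i

/-- Euclidean inner product on `F^{2n}`. -/
def eInn2 {n : ℕ} (x y : (Fin n → F) × (Fin n → F)) : F := eInn x.1 y.1 + eInn x.2 y.2

/-- Symplectic inner product on `F^{2n}`. -/
def sInn {n : ℕ} (x y : (Fin n → F) × (Fin n → F)) : F :=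
  ∑ i, (x.1 i * y.2 i - x.2 i * y.1 i)

/-- Hermitian inner product on `F^{2n}` (with respect to `x ↦ x^q`). -/
def hInn2 (q : ℕ) {n : ℕ} (x y : (Fin n → F) × (Fin n → F)) : F :=
  (∑ i, x.1 i ^ q * y.1 i) + ∑ i, x.2 i ^ q * y.2 i

def sDualSet {n : ℕ} (C : Set ((Fin n → F) × (Fin n → F))) : Set ((Fin n → F) × (Fin n → F)) :=
  {x | ∀ y ∈ C, sInn x y = 0}

def eDualSet {n : ℕ} (C : Set ((Fin n → F) × (Fin n → F))) : Set ((Fin n → F) × (Fin n → F)) :=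
  {x | ∀ y ∈ C, eInn2 x y = 0}

def hDualSet (q : ℕ) {n : ℕ} (C : Set ((Fin n → F) × (Fin n → F))) :
    Set ((Fin n → F) × (Fin n → F)) :=
  {x | ∀ y ∈ C, hInn2 q x y = 0}

/-- `x^n f(1/x)` for `f` of degree `< n`. -/
def barPoly (n : ℕ) (f : F[X]) : F[X] := ∑ i ∈ f.support, C (f.coeff i) * X ^ (n - i)

/-- `f^⊥ = x^{deg f'} f'(1/x)` where `f f' = x^n - 1`. -/
def perpPoly (n : ℕ) (f : F[X]) : F[X] := ((X ^ n - 1) /ₘ f).reverse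

/-- coefficientwise `q`-th power. -/
def polyQ (q : ℕ) (f : F[X]) : F[X] := ∑ i ∈ f.support, C (f.coeff i ^ q) * X ^ i

/-- minimum Hamming weight of the cyclic code generated by `[u]`. -/
def cycDist (n : ℕ) (u : F[X]) : ℕ :=
  sInf {w | ∃ a : F[X], vecOf n (a * u) ≠ 0 ∧ w = hWt (vecOf n (a * u))}

/-- The general QC set generated by `([u₁],[v₁])` and `([u₂],[v₂])`. -/
def QCspan (n : ℕ) (u₁ v₁ u₂ v₂ : F[X]) : Set ((Fin n → F) × (Fin n → F)) :=
  {w | ∃ a b : F[X], w = (vecOf n (a * u₁ + b * u₂), vecOf n (a * v₁ + b * v₂))}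

/-- The lower bound `d_q(f,g,h)` for the symplectic weight (a rational number). -/
def dSymp (q n : ℕ) (f g h : F[X]) : ℚ :=
  min (min (min (cycDist n g : ℚ)
    (cycDist n ((X ^ n - 1) / GCDMonoid.gcd (X ^ n - 1) h) : ℚ))
    (cycDist n (GCDMonoid.lcm f (g / GCDMonoid.gcd g h)) : ℚ))
    ((cycDist n f + cycDist n (GCDMonoid.gcd (h * f) g) + ((q : ℚ) - 1) * cycDist n (GCDMonoid.gcd f g)) / q)

/-- The lower bound `d_q^e(f,g,h)` for the minimum distance. -/
def dEucl (n : ℕ) (f g h : F[X]) : ℕ :=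
  min (min (min (cycDist n g)
    (cycDist n ((X ^ n - 1) / GCDMonoid.gcd (X ^ n - 1) h)))
    (cycDist n (GCDMonoid.lcm f (g / GCDMonoid.gcd g h))))
    (cycDist n f + cycDist n (GCDMonoid.gcd (h * f) g))

end

theorem mul_divByMonic_eq_of_dvd {R : Type*} [CommRing R] {p q : R[X]} (hq : q.Monic)
    (h : q ∣ p) : q * (p /ₘ q) = p := by
  simpa [(modByMonic_eq_zero_iff_dvd hq).2 h] using modByMonic_add_div p q

section CyclicAlgebra

variable {F : Type*} [Field F] {n : ℕ}

theorem monic_X_pow_sub_one (hn : 0 < n) : (X ^ n - 1 : F[X]).Monic := by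
  simpa using monic_X_pow_sub_C (1 : F) hn.ne'

theorem natDegree_X_pow_sub_one : (X ^ n - 1 : F[X]).natDegree = n := by
  simpa using natDegree_X_pow_sub_C (n := n) (r := (1 : F))

theorem degree_X_pow_sub_one (hn : 0 < n) : (X ^ n - 1 : F[X]).degree = n := by
  simpa using degree_X_pow_sub_C hn (1 : F)

theorem natDegree_le_of_dvd_X_pow_sub_one (hn : 0 < n) {p : F[X]} (hp : p ∣ X ^ n - 1) :
    p.natDegree ≤ n :=
  natDegree_X_pow_sub_one (F := F) (n := n) ▸
    natDegree_le_of_dvd hp (monic_X_pow_sub_one hn).ne_zero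

theorem modByMonic_X_pow_sub_one_mem_degreeLT (hn : 0 < n) (a : F[X]) :
    a %ₘ (X ^ n - 1 : F[X]) ∈ degreeLT F n := by
  rw [mem_degreeLT, ← degree_X_pow_sub_one (F := F) hn]
  exact degree_modByMonic_lt a (monic_X_pow_sub_one hn)

theorem vecOf_eq_degreeLTEquiv (hn : 0 < n) (a : F[X]) :
    vecOf n a = degreeLTEquiv F n ⟨_, modByMonic_X_pow_sub_one_mem_degreeLT hn a⟩ := rfl

theorem vecOf_eq_zero_iff (hn : 0 < n) {a : F[X]} : vecOf n a = 0 ↔ (X ^ n - 1 : F[X]) ∣ a := by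
  rw [vecOf_eq_degreeLTEquiv hn, degreeLTEquiv_eq_zero_iff_eq_zero,
    modByMonic_eq_zero_iff_dvd (monic_X_pow_sub_one hn)]

theorem vecOf_eq_vecOf_of_dvd_sub (hn : 0 < n) {a b : F[X]} (h : (X ^ n - 1 : F[X]) ∣ a - b) :
    vecOf n a = vecOf n b := by
  rw [← sub_eq_zero, ← map_sub, vecOf_eq_zero_iff hn]
  exact h

noncomputable def ofVec (x : Fin n → F) : F[X] := ((degreeLTEquiv F n).symm x : F[X])

theorem degree_ofVec_lt (x : Fin n → F) : (ofVec x).degree < n :=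
  mem_degreeLT.1 ((degreeLTEquiv F n).symm x).2

theorem natDegree_ofVec_le (x : Fin n → F) : (ofVec x).natDegree ≤ n :=
  natDegree_le_of_degree_le (degree_ofVec_lt x).le

theorem coeff_ofVec (x : Fin n → F) (i : Fin n) : (ofVec x).coeff i = x i :=
  congrFun ((degreeLTEquiv F n).apply_symm_apply x) i

theorem vecOf_ofVec (hn : 0 < n) (x : Fin n → F) : vecOf n (ofVec x) = x := by
  have h : ofVec x %ₘ (X ^ n - 1) = ofVec x := by
    rw [modByMonic_eq_self_iff (monic_X_pow_sub_one hn), degree_X_pow_sub_one hn]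
    exact degree_ofVec_lt x
  rw [vecOf_eq_degreeLTEquiv hn]
  simp only [h]
  exact (degreeLTEquiv F n).apply_symm_apply x

theorem natDegree_modByMonic_X_pow_sub_one_lt (hn : 0 < n) (a : F[X]) :
    (a %ₘ (X ^ n - 1)).natDegree < n := by
  have hM1 : (X ^ n - 1 : F[X]) ≠ 1 := fun h => by
    have := natDegree_X_pow_sub_one (F := F) (n := n)
    rw [h, natDegree_one] at this
    omega
  simpa only [natDegree_X_pow_sub_one] using
    natDegree_modByMonic_lt a (monic_X_pow_sub_one hn) hM1

theorem coeff_zero_modByMonic_X_pow_sub_one (hn : 0 < n) {y : F[X]} (hy : y.natDegree < 2 * n) :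
    (y %ₘ (X ^ n - 1)).coeff 0 = y.coeff 0 + y.coeff n := by
  have hM := monic_X_pow_sub_one (F := F) hn
  have hq : (y /ₘ (X ^ n - 1)).natDegree < n := by
    rw [natDegree_divByMonic _ hM, natDegree_X_pow_sub_one]; omega
  have hr : (y %ₘ (X ^ n - 1)).coeff n = 0 :=
    coeff_eq_zero_of_degree_lt (mem_degreeLT.1 (modByMonic_X_pow_sub_one_mem_degreeLT hn y))
  conv_rhs => rw [← modByMonic_add_div y (X ^ n - 1)]
  simp [sub_mul, coeff_X_pow_mul', mul_coeff_zero, hr, coeff_eq_zero_of_natDegree_lt hq, hn.ne]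

theorem eInn_vecOf (hn : 0 < n) (x : Fin n → F) (w : F[X]) :
    eInn x (vecOf n w) = ((reflect n (ofVec x) * w) %ₘ (X ^ n - 1)).coeff 0 := by
  set U := reflect n (ofVec x)
  set r := w %ₘ (X ^ n - 1)
  have hr : r.degree < n := mem_degreeLT.1 (modByMonic_X_pow_sub_one_mem_degreeLT hn w)
  have hU0 : U.coeff 0 = 0 := by
    rw [coeff_reflect, revAt_zero]
    exact coeff_eq_zero_of_degree_lt (degree_ofVec_lt x)
  have hUr : (U * r).natDegree < 2 * n := by
    have h1 : U.natDegree ≤ max n (ofVec x).natDegree := natDegree_reflect_le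
    have h2 : (ofVec x).natDegree ≤ n := natDegree_ofVec_le x
    have h3 : r.natDegree < n := natDegree_modByMonic_X_pow_sub_one_lt hn w
    have h4 : (U * r).natDegree ≤ U.natDegree + r.natDegree := natDegree_mul_le
    omega
  have hcoeff : (U * r).coeff n = ∑ i : Fin n, x i * r.coeff i := by
    rw [coeff_mul, ← Finset.Nat.sum_antidiagonal_swap]
    simp only [Prod.fst_swap, Prod.snd_swap]
    rw [Finset.Nat.sum_antidiagonal_eq_sum_range_succ (fun j k => U.coeff k * r.coeff j),
      Finset.sum_range_succ, coeff_eq_zero_of_degree_lt hr, mul_zero, add_zero,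
      ← Fin.sum_univ_eq_sum_range]
    refine Finset.sum_congr rfl fun i _ => ?_
    rw [coeff_reflect, revAt_le (by omega), Nat.sub_sub_self i.isLt.le, coeff_ofVec]
  have hmod : (U * w) %ₘ (X ^ n - 1) = (U * r) %ₘ (X ^ n - 1) := by
    refine modByMonic_eq_of_dvd_sub (monic_X_pow_sub_one hn) ⟨U * (w /ₘ (X ^ n - 1)), ?_⟩
    have := modByMonic_add_div w (X ^ n - 1 : F[X])
    linear_combination (-U) * this
  rw [hmod, coeff_zero_modByMonic_X_pow_sub_one hn hUr, mul_coeff_zero, hU0, zero_mul, zero_add,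
    hcoeff]
  rfl

theorem X_pow_sub_one_dvd_of_forall_coeff_zero_modByMonic (hn : 0 < n) {z : F[X]}
    (hz : ∀ a, ((z * a) %ₘ (X ^ n - 1)).coeff 0 = 0) : (X ^ n - 1 : F[X]) ∣ z := by
  rw [← vecOf_eq_zero_iff hn]
  funext i
  have h := hz (reflect n (ofVec (Pi.single i 1)))
  rwa [mul_comm, ← eInn_vecOf hn, eInn, Finset.sum_eq_single i (by simp_all) (by simp),
    Pi.single_eq_same, one_mul] at h

theorem sInn_vecOf (hn : 0 < n) (x : (Fin n → F) × (Fin n → F)) (p q : F[X]) :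
    sInn x (vecOf n p, vecOf n q) =
      ((reflect n (ofVec x.1) * q - reflect n (ofVec x.2) * p) %ₘ (X ^ n - 1)).coeff 0 := by
  rw [sub_modByMonic, coeff_sub, ← eInn_vecOf hn, ← eInn_vecOf hn, sInn, eInn, eInn,
    ← Finset.sum_sub_distrib]

end CyclicAlgebra

section Reflection

variable {F : Type*} [Field F] {n : ℕ}

theorem reverse_dvd_reflect {p U : F[X]} {N : ℕ} (hp : p ∣ U) (hU : U.natDegree ≤ N) :
    p.reverse ∣ reflect N U := by
  obtain ⟨c, rfl⟩ := hp
  rcases eq_or_ne (p * c) 0 with h0 | h0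
  · simp [h0]
  rw [natDegree_mul (left_ne_zero_of_mul h0) (right_ne_zero_of_mul h0)] at hU
  rw [show N = p.natDegree + (N - p.natDegree) by omega, reflect_mul p c le_rfl (by omega)]
  exact dvd_mul_right _ _

theorem perpPoly_dvd_reflect {g U : F[X]} {N : ℕ} (hg : g.Monic)
    (hgM : g ∣ X ^ n - 1) (hU : U.natDegree ≤ N) (h : (X ^ n - 1 : F[X]) ∣ U * g) :
    perpPoly n g ∣ reflect N U := by
  have hM : g * ((X ^ n - 1) /ₘ g) = X ^ n - 1 := mul_divByMonic_eq_of_dvd hg hgM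
  rw [← hM, mul_comm U, mul_dvd_mul_iff_left hg.ne_zero] at h
  exact reverse_dvd_reflect h hU

theorem dvd_of_dvd_mul_X_pow_of_dvd_X_pow_sub_one {g v : F[X]} (hgM : g ∣ X ^ n - 1)
    (h : g ∣ v * X ^ n) : g ∣ v :=
  (IsCoprime.of_isCoprime_of_dvd_left (⟨-1, 1, by ring⟩ : IsCoprime (X ^ n - 1 : F[X]) (X ^ n))
    hgM).dvd_of_dvd_mul_right h

end Reflection

section SelfOrthogonality

variable {F : Type*} [Field F] {n : ℕ} {f g h : F[X]}

theorem mk_vecOf_mem_QCcode {u v : F[X]} (hu : f ∣ u) (hv : g ∣ v - u * h) :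
    (vecOf n u, vecOf n v) ∈ QCcode n f g h := by
  obtain ⟨a, rfl⟩ := hu
  obtain ⟨b, hb⟩ := hv
  exact ⟨a, b, by rw [mul_comm f a, show v = a * h * f + b * g by linear_combination hb]⟩

theorem sDualSet_QCcode_subset (hn : 0 < n) (hf : f.Monic) (hg : g.Monic)
    (hfM : f ∣ X ^ n - 1) (hgM : g ∣ X ^ n - 1) (hh : h.natDegree ≤ n)
    (hfg : f ∣ g) (hg_perp : g ∣ perpPoly n g) (hperp : perpPoly n g ∣ perpPoly n f) :
    sDualSet (QCcode n f g h : Set ((Fin n → F) × (Fin n → F))) ⊆ QCcode n f g h := by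
  intro x hx
  set u := ofVec x.1
  set v := ofVec x.2
  have hu : u.natDegree ≤ n := natDegree_ofVec_le x.1
  have hv : v.natDegree ≤ n := natDegree_ofVec_le x.2
  have hU : (reflect n u).natDegree ≤ n := natDegree_reflect_le.trans (max_le le_rfl hu)
  have hV : (reflect n v).natDegree ≤ n := natDegree_reflect_le.trans (max_le le_rfl hv)
  have horth (a b : F[X]) :
      ((reflect n u * (a * h * f + b * g) - reflect n v * (a * f)) %ₘ (X ^ n - 1)).coeff 0 = 0 :=
    (sInn_vecOf hn x _ _).symm.trans (hx _ ⟨a, b, rfl⟩)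
  have hUg : (X ^ n - 1 : F[X]) ∣ reflect n u * g :=
    X_pow_sub_one_dvd_of_forall_coeff_zero_modByMonic hn fun b => by
      convert horth 0 b using 3; ring
  have hUVf : (X ^ n - 1 : F[X]) ∣ (reflect n u * h - reflect n v) * f :=
    X_pow_sub_one_dvd_of_forall_coeff_zero_modByMonic hn fun a => by
      convert horth a 0 using 3; ring
  have hgu : g ∣ u := by
    simpa using hg_perp.trans (perpPoly_dvd_reflect hg hgM hU hUg)
  have hgv : g ∣ v := by
    have hdeg : (reflect n u * h - reflect n v).natDegree ≤ n + n :=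
      (natDegree_sub_le _ _).trans (max_le (natDegree_mul_le.trans (by omega)) (by omega))
    have hreflect :
        reflect (n + n) (reflect n u * h - reflect n v) = u * reflect n h - v * X ^ n := by
      rw [reflect_sub, reflect_mul _ _ hU hh, ← mul_one (reflect n v),
        reflect_mul _ _ hV (natDegree_one.trans_le (Nat.zero_le n)), reflect_one,
        reflect_reflect, reflect_reflect]
    have h1 : g ∣ u * reflect n h - v * X ^ n :=
      hreflect ▸ (hg_perp.trans hperp).trans (perpPoly_dvd_reflect hf hfM hdeg hUVf)
    refine dvd_of_dvd_mul_X_pow_of_dvd_X_pow_sub_one hgM ?_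
    simpa using (dvd_mul_of_dvd_left hgu (reflect n h)).sub h1
  have hx_eq : (vecOf n u, vecOf n v) = x := by rw [vecOf_ofVec hn, vecOf_ofVec hn]
  exact hx_eq ▸ mk_vecOf_mem_QCcode (hfg.trans hgu) (hgv.sub (dvd_mul_of_dvd_left hgu h))

end SelfOrthogonality

section Dimension

variable {F : Type*} [Field F] {n : ℕ} {f g h : F[X]}

noncomputable def qcMap (n : ℕ) (f g h : F[X]) : F[X] × F[X] →ₗ[F] (Fin n → F) × (Fin n → F) :=
  (vecOf n ∘ₗ LinearMap.mulRight F f ∘ₗ LinearMap.fst F F[X] F[X]).prod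
    (vecOf n ∘ₗ (LinearMap.mulRight F (h * f) ∘ₗ LinearMap.fst F F[X] F[X] +
      LinearMap.mulRight F g ∘ₗ LinearMap.snd F F[X] F[X]))

theorem qcMap_apply (a b : F[X]) :
    qcMap n f g h (a, b) = (vecOf n (a * f), vecOf n (a * h * f + b * g)) := by
  simp [qcMap, mul_assoc]

theorem range_qcMap : LinearMap.range (qcMap n f g h) = QCcode n f g h := by
  ext v
  simp only [LinearMap.mem_range, Prod.exists, qcMap_apply]
  exact ⟨fun ⟨a, b, hv⟩ => ⟨a, b, hv.symm⟩, fun ⟨a, b, hv⟩ => ⟨a, b, hv.symm⟩⟩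

theorem qcMap_modByMonic (hn : 0 < n) (hf : f.Monic) (hg : g.Monic) (hfM : f ∣ X ^ n - 1)
    (hgM : g ∣ X ^ n - 1) (a b : F[X]) :
    qcMap n f g h (a %ₘ ((X ^ n - 1) /ₘ f), b %ₘ ((X ^ n - 1) /ₘ g)) = qcMap n f g h (a, b) := by
  set f' := (X ^ n - 1 : F[X]) /ₘ f
  set g' := (X ^ n - 1 : F[X]) /ₘ g
  have hf' : f * f' = X ^ n - 1 := mul_divByMonic_eq_of_dvd hf hfM
  have hg' : g * g' = X ^ n - 1 := mul_divByMonic_eq_of_dvd hg hgM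
  have ha := modByMonic_add_div a f'
  have hb := modByMonic_add_div b g'
  rw [qcMap_apply, qcMap_apply]
  congr 1 <;> refine vecOf_eq_vecOf_of_dvd_sub hn ?_
  · exact ⟨-(a /ₘ f'), by linear_combination f * ha - (a /ₘ f') * hf'⟩
  · exact ⟨-(a /ₘ f') * h - b /ₘ g', by
      linear_combination h * f * ha - (a /ₘ f') * h * hf' + g * hb - (b /ₘ g') * hg'⟩

theorem modByMonic_divByMonic_mem_degreeLT (hn : 0 < n) (hf : f.Monic) (hfM : f ∣ X ^ n - 1)
    (a : F[X]) : a %ₘ ((X ^ n - 1) /ₘ f) ∈ degreeLT F (n - f.natDegree) := by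
  have hquot : ((X ^ n - 1 : F[X]) /ₘ f).Monic :=
    hf.of_mul_monic_left (by rw [mul_divByMonic_eq_of_dvd hf hfM]; exact monic_X_pow_sub_one hn)
  have hdeg : ((X ^ n - 1 : F[X]) /ₘ f).degree = (n - f.natDegree : ℕ) := by
    rw [degree_eq_natDegree hquot.ne_zero, natDegree_divByMonic _ hf, natDegree_X_pow_sub_one]
  rw [mem_degreeLT, ← hdeg]
  exact degree_modByMonic_lt a hquot

theorem eq_zero_of_X_pow_sub_one_dvd_mul {p : F[X]} (hf : f ≠ 0) (hfn : f.natDegree ≤ n)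
    (hp : p ∈ degreeLT F (n - f.natDegree)) (h : (X ^ n - 1 : F[X]) ∣ p * f) : p = 0 := by
  by_contra hp0
  have hpn : p.natDegree < n - f.natDegree :=
    (natDegree_lt_iff_degree_lt hp0).2 (mem_degreeLT.1 hp)
  refine mul_ne_zero hp0 hf (eq_zero_of_dvd_of_natDegree_lt h ?_)
  rw [natDegree_mul hp0 hf, natDegree_X_pow_sub_one]
  omega

theorem finrank_QCcode (hn : 0 < n) (hf : f.Monic) (hg : g.Monic) (hfM : f ∣ X ^ n - 1)
    (hgM : g ∣ X ^ n - 1) :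
    Module.finrank F (QCcode n f g h) = 2 * n - f.natDegree - g.natDegree := by
  have hfn := natDegree_le_of_dvd_X_pow_sub_one hn hfM
  have hgn := natDegree_le_of_dvd_X_pow_sub_one hn hgM
  set ψ := qcMap n f g h ∘ₗ
    (degreeLT F (n - f.natDegree)).subtype.prodMap (degreeLT F (n - g.natDegree)).subtype
  have hrange : LinearMap.range ψ = QCcode n f g h := by
    refine le_antisymm ((LinearMap.range_comp_le_range _ _).trans range_qcMap.le) ?_
    rintro _ ⟨a, b, rfl⟩
    refine ⟨(⟨_, modByMonic_divByMonic_mem_degreeLT hn hf hfM a⟩,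
      ⟨_, modByMonic_divByMonic_mem_degreeLT hn hg hgM b⟩), ?_⟩
    simp only [ψ, LinearMap.comp_apply, LinearMap.prodMap_apply, Submodule.subtype_apply]
    rw [qcMap_modByMonic hn hf hg hfM hgM, qcMap_apply]
  have hinj : Function.Injective ψ := by
    rw [← LinearMap.ker_eq_bot, LinearMap.ker_eq_bot']
    rintro ⟨⟨a, ha⟩, ⟨b, hb⟩⟩ hab
    simp only [ψ, LinearMap.comp_apply, LinearMap.prodMap_apply, Submodule.subtype_apply,
      qcMap_apply, Prod.mk_eq_zero, vecOf_eq_zero_iff hn] at hab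
    have ha0 : a = 0 := eq_zero_of_X_pow_sub_one_dvd_mul hf.ne_zero hfn ha hab.1
    subst ha0
    have hb0 : b = 0 :=
      eq_zero_of_X_pow_sub_one_dvd_mul hg.ne_zero hgn hb (by simpa using hab.2)
    subst hb0
    rfl
  rw [← hrange, LinearMap.finrank_range_of_inj hinj, Module.finrank_prod,
    (degreeLTEquiv F _).finrank_eq, (degreeLTEquiv F _).finrank_eq, Module.finrank_fin_fun,
    Module.finrank_fin_fun]
  omega

end Dimension

section Weights

variable {F : Type*} [Field F] {n : ℕ}

theorem hWt_fst_le_sWt (v : (Fin n → F) × (Fin n → F)) : hWt v.1 ≤ sWt v :=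
  Nat.card_mono (s := {i | v.1 i ≠ 0}) (Set.toFinite _) fun _ hi h => hi (congrArg Prod.fst h)

theorem hWt_snd_le_sWt (v : (Fin n → F) × (Fin n → F)) : hWt v.2 ≤ sWt v :=
  Nat.card_mono (s := {i | v.2 i ≠ 0}) (Set.toFinite _) fun _ hi h => hi (congrArg Prod.snd h)

theorem hWt_eq_card [DecidableEq F] (x : Fin n → F) : hWt x = #{i | x i ≠ 0} := by
  rw [hWt, Nat.card_eq_fintype_card, Fintype.card_subtype]

theorem ite_add_sum_ite_sub_mul_ne_zero [Fintype F] [DecidableEq F] (s t : F) :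
    (if s ≠ 0 then 1 else 0) + ∑ β : F, (if t - β * s ≠ 0 then 1 else 0) =
      Fintype.card F * if (s, t) ≠ (0, 0) then 1 else 0 := by
  rw [← card_filter]
  by_cases hs : s = 0
  · by_cases ht : t = 0 <;> simp [hs, ht, Finset.card_univ]
  · have hfilter : ({β | t - β * s ≠ 0} : Finset F) = univ.erase (t / s) := by
      ext β
      simp [sub_eq_zero, eq_div_iff hs, eq_comm]
    rw [hfilter, card_erase_of_mem (mem_univ _), card_univ, if_pos hs, if_pos (by simp [hs])]
    have := Fintype.card_pos (α := F)
    omega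

theorem card_mul_sWt [Fintype F] (c₁ c₂ : Fin n → F) :
    Fintype.card F * sWt (c₁, c₂) = hWt c₁ + ∑ β : F, hWt (c₂ - β • c₁) := by
  classical
  simp only [hWt_eq_card, sWt, Nat.card_eq_fintype_card, Fintype.card_subtype, card_filter,
    Pi.sub_apply, Pi.smul_apply, smul_eq_mul]
  rw [Finset.sum_comm, Finset.mul_sum, ← Finset.sum_add_distrib]
  exact Finset.sum_congr rfl fun i _ => (ite_add_sum_ite_sub_mul_ne_zero _ _).symm

theorem le_card_mul_sWt [Fintype F] {c₁ c₂ : Fin n → F} {d₁ d₂ d₃ : ℕ} (h₁ : d₁ ≤ hWt c₁)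
    (h₂ : d₂ ≤ hWt c₂) (h₃ : ∀ β : F, β ≠ 0 → d₃ ≤ hWt (c₂ - β • c₁)) :
    d₁ + d₂ + (Fintype.card F - 1) * d₃ ≤ Fintype.card F * sWt (c₁, c₂) := by
  classical
  have hsum := Finset.card_nsmul_le_sum (univ.erase (0 : F)) _ d₃
    fun β hβ => h₃ β (ne_of_mem_erase hβ)
  rw [card_erase_of_mem (mem_univ _), card_univ, smul_eq_mul] at hsum
  rw [card_mul_sWt, ← Finset.add_sum_erase _ _ (mem_univ 0), zero_smul, sub_zero]
  omega

theorem cycDist_le_hWt {u z : F[X]} (hu : u ∣ z) (hz : vecOf n z ≠ 0) :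
    cycDist n u ≤ hWt (vecOf n z) := by
  obtain ⟨c, rfl⟩ := hu
  exact Nat.sInf_le ⟨c, by rwa [mul_comm], by rw [mul_comm]⟩

end Weights

theorem div_gcd_dvd_of_dvd_mul {R : Type*} [EuclideanDomain R] [GCDMonoid R] {g p h : R}
    (hg : g ≠ 0) (hgh : g ∣ p * h) : g / GCDMonoid.gcd g h ∣ p := by
  have hd : GCDMonoid.gcd g h ≠ 0 := gcd_ne_zero_of_left hg
  have hdvd : GCDMonoid.gcd g h * (g / GCDMonoid.gcd g h) ∣
      GCDMonoid.gcd g h * (p * (h / GCDMonoid.gcd g h)) := by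
    rwa [EuclideanDomain.mul_div_cancel' hd (gcd_dvd_left g h), mul_left_comm,
      EuclideanDomain.mul_div_cancel' hd (gcd_dvd_right g h)]
  exact (isCoprime_div_gcd_div_gcd_of_gcd_ne_zero hd).dvd_of_dvd_mul_right
    ((mul_dvd_mul_iff_left hd).1 hdvd)

section SymplecticWeight

variable {F : Type*} [Field F] {n : ℕ} {f g h : F[X]}

theorem dvd_mul_sub_C_of_vecOf_eq_smul (hn : 0 < n) (hgM : g ∣ X ^ n - 1) {a b : F[X]} {β : F}
    (hβ : vecOf n (a * h * f + b * g) = β • vecOf n (a * f)) : g ∣ a * f * (h - C β) := by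
  have hM : (X ^ n - 1 : F[X]) ∣ a * h * f + b * g - C β * (a * f) := by
    rw [← vecOf_eq_zero_iff hn, map_sub, ← smul_eq_C_mul, map_smul, hβ, sub_self]
  convert (hgM.trans hM).sub (dvd_mul_left g b) using 1
  ring

variable [DecidableEq F]

theorem dSymp_le_cycDist (q : ℕ) : dSymp q n f g h ≤ cycDist n g :=
  (min_le_left _ _).trans ((min_le_left _ _).trans (min_le_left _ _))

theorem dSymp_le_cycDist_lcm (q : ℕ) :
    dSymp q n f g h ≤ cycDist n (GCDMonoid.lcm f (g / GCDMonoid.gcd g h)) :=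
  (min_le_left _ _).trans (min_le_right _ _)

theorem dSymp_le_div (q : ℕ) :
    dSymp q n f g h ≤ (cycDist n f + cycDist n (GCDMonoid.gcd (h * f) g) +
      ((q : ℚ) - 1) * cycDist n (GCDMonoid.gcd f g)) / q :=
  min_le_right _ _

variable [Fintype F]

theorem dSymp_le_sWt_of_fst_eq_zero (hn : 0 < n) {a b : F[X]} (h₁ : vecOf n (a * f) = 0)
    (hv : (vecOf n (a * f), vecOf n (a * h * f + b * g)) ≠ 0) :
    dSymp (Fintype.card F) n f g h ≤ sWt (vecOf n (a * f), vecOf n (a * h * f + b * g)) := by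
  have hc₂ : vecOf n (a * h * f + b * g) = vecOf n (b * g) := by
    refine vecOf_eq_vecOf_of_dvd_sub hn ?_
    convert ((vecOf_eq_zero_iff hn).1 h₁).mul_right h using 1
    ring
  have hne : vecOf n (b * g) ≠ 0 := hc₂ ▸ fun h₂ => hv (Prod.ext h₁ h₂)
  have hle : cycDist n g ≤ sWt (vecOf n (a * f), vecOf n (a * h * f + b * g)) := by
    rw [hc₂]
    exact (cycDist_le_hWt (dvd_mul_left g b) hne).trans
      (hWt_snd_le_sWt (vecOf n (a * f), vecOf n (b * g)))
  exact (dSymp_le_cycDist _).trans (by exact_mod_cast hle)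

theorem dSymp_le_sWt_of_snd_eq_smul_fst (hn : 0 < n) (hgM : g ∣ X ^ n - 1)
    (hcop : ∀ β : F, β ≠ 0 → GCDMonoid.gcd (h - C β) (X ^ n - 1) = 1) {a b : F[X]} {β : F}
    (h₁ : vecOf n (a * f) ≠ 0) (hβ : vecOf n (a * h * f + b * g) = β • vecOf n (a * f)) :
    dSymp (Fintype.card F) n f g h ≤ sWt (vecOf n (a * f), vecOf n (a * h * f + b * g)) := by
  have hdvd := dvd_mul_sub_C_of_vecOf_eq_smul hn hgM hβ
  have hsWt := hWt_fst_le_sWt (vecOf n (a * f), vecOf n (a * h * f + b * g))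
  rcases eq_or_ne β 0 with rfl | hβ0
  · have hg0 : g ≠ 0 := ne_zero_of_dvd_ne_zero (monic_X_pow_sub_one hn).ne_zero hgM
    have hlcm : GCDMonoid.lcm f (g / GCDMonoid.gcd g h) ∣ a * f :=
      lcm_dvd (dvd_mul_left f a) (div_gcd_dvd_of_dvd_mul hg0 (by simpa using hdvd))
    exact (dSymp_le_cycDist_lcm _).trans (by exact_mod_cast (cycDist_le_hWt hlcm h₁).trans hsWt)
  · have hco : IsCoprime (h - C β) g :=
      ((gcd_isUnit_iff _ _).1 (by rw [hcop β hβ0]; exact isUnit_one)).of_isCoprime_of_dvd_right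
        hgM
    have hgaf : g ∣ a * f := hco.symm.dvd_of_dvd_mul_right hdvd
    exact (dSymp_le_cycDist _).trans (by exact_mod_cast (cycDist_le_hWt hgaf h₁).trans hsWt)

theorem dSymp_le_sWt_of_snd_ne_smul_fst {a b : F[X]} (h₁ : vecOf n (a * f) ≠ 0)
    (h₂ : ∀ β : F, vecOf n (a * h * f + b * g) ≠ β • vecOf n (a * f)) :
    dSymp (Fintype.card F) n f g h ≤ sWt (vecOf n (a * f), vecOf n (a * h * f + b * g)) := by
  have hsub (β : F) : vecOf n (a * h * f + b * g) - β • vecOf n (a * f) =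
      vecOf n (a * h * f + b * g - C β * (a * f)) := by
    rw [map_sub, ← smul_eq_C_mul, map_smul]
  have hd₂ : GCDMonoid.gcd (h * f) g ∣ a * h * f + b * g :=
    ((gcd_dvd_left _ _).trans ⟨a, by ring⟩).add ((gcd_dvd_right _ _).trans (dvd_mul_left g b))
  have hd₃ (β : F) : GCDMonoid.gcd f g ∣ a * h * f + b * g - C β * (a * f) :=
    (((gcd_dvd_left f g).trans (dvd_mul_left f (a * h))).add
      ((gcd_dvd_right f g).trans (dvd_mul_left g b))).sub
      (((gcd_dvd_left f g).trans (dvd_mul_left f a)).mul_left (C β))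
  have hN := le_card_mul_sWt (cycDist_le_hWt (dvd_mul_left f a) h₁)
    (cycDist_le_hWt hd₂ (by simpa using h₂ 0))
    (fun β _ => hsub β ▸ cycDist_le_hWt (hd₃ β) (hsub β ▸ sub_ne_zero.2 (h₂ β)))
  have hq : 0 < Fintype.card F := Fintype.card_pos
  refine (dSymp_le_div _).trans ?_
  rw [div_le_iff₀ (by exact_mod_cast hq), ← Nat.cast_pred hq]
  exact_mod_cast hN.trans_eq (mul_comm _ _)

theorem dSymp_le_sWt (hn : 0 < n) (hgM : g ∣ X ^ n - 1)
    (hcop : ∀ β : F, β ≠ 0 → GCDMonoid.gcd (h - C β) (X ^ n - 1) = 1)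
    {v : (Fin n → F) × (Fin n → F)} (hv : v ∈ QCcode n f g h) (hv0 : v ≠ 0) :
    dSymp (Fintype.card F) n f g h ≤ sWt v := by
  obtain ⟨a, b, rfl⟩ := hv
  by_cases h₁ : vecOf n (a * f) = 0
  · exact dSymp_le_sWt_of_fst_eq_zero hn h₁ hv0
  by_cases h₂ : ∃ β : F, vecOf n (a * h * f + b * g) = β • vecOf n (a * f)
  · obtain ⟨β, hβ⟩ := h₂
    exact dSymp_le_sWt_of_snd_eq_smul_fst hn hgM hcop h₁ hβ
  · exact dSymp_le_sWt_of_snd_ne_smul_fst h₁ (not_exists.1 h₂)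

end SymplecticWeight

section

variable {F : Type*} [Field F] [DecidableEq F]

theorem stmt7_general [Fintype F] (n : ℕ) (hn : 0 < n) (f g h : F[X])
    (hf : f.Monic) (hg : g.Monic)
    (hhd : h.degree < n)
    (hfdvd : f ∣ X ^ n - 1) (hgdvd : g ∣ X ^ n - 1)
    (hcop : ∀ β : F, β ≠ 0 → GCDMonoid.gcd (h - C β) (X ^ n - 1) = 1)
    (hd1 : f ∣ g) (hd2 : g ∣ perpPoly n g) (hd3 : perpPoly n g ∣ perpPoly n f) :
    sDualSet (QCcode n f g h : Set ((Fin n → F) × (Fin n → F))) ⊆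
        (QCcode n f g h : Set ((Fin n → F) × (Fin n → F))) ∧
      Module.finrank F (QCcode n f g h) = 2 * n - f.natDegree - g.natDegree ∧
      ∀ v ∈ QCcode n f g h,
        v ∉ sDualSet (QCcode n f g h : Set ((Fin n → F) × (Fin n → F))) →
        (sWt v : ℚ) ≥ dSymp (Fintype.card F) n f g h := by
  refine ⟨?_, finrank_QCcode hn hf hg hfdvd hgdvd, fun v hv hv_dual => ?_⟩
  · exact sDualSet_QCcode_subset hn hf hg hfdvd hgdvd (natDegree_le_of_degree_le hhd.le)
      hd1 hd2 hd3
  · have hv0 : v ≠ 0 := by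
      rintro rfl
      exact hv_dual fun y _ => by simp [sInn]
    exact dSymp_le_sWt hn hgdvd hcop hv hv0

/-- under condition (ii), `Q` is symplectic self-orthogonal with the stated
dimension and symplectic weight bound. -/
theorem stmt7 [Fintype F] (n : ℕ) (hn : 0 < n) (f g h : F[X])
    (hf : f.Monic) (hg : g.Monic) (hh : h.Monic)
    (hfd : f.degree < n) (hgd : g.degree < n) (hhd : h.degree < n)
    (hfdvd : f ∣ X ^ n - 1) (hgdvd : g ∣ X ^ n - 1)
    (hcop : ∀ β : F, β ≠ 0 → GCDMonoid.gcd (h - C β) (X ^ n - 1) = 1)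
    (hd1 : f ∣ g) (hd2 : g ∣ perpPoly n g) (hd3 : perpPoly n g ∣ perpPoly n f) :
    sDualSet (QCcode n f g h : Set ((Fin n → F) × (Fin n → F))) ⊆
        (QCcode n f g h : Set ((Fin n → F) × (Fin n → F))) ∧
      Module.finrank F (QCcode n f g h) = 2 * n - f.natDegree - g.natDegree ∧
      ∀ v ∈ QCcode n f g h,
        v ∉ sDualSet (QCcode n f g h : Set ((Fin n → F) × (Fin n → F))) →
        (sWt v : ℚ) ≥ dSymp (Fintype.card F) n f g h :=
  stmt7_general n hn f g h hf hg hhd hfdvd hgdvd hcop hd1 hd2 hd3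

end
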